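/- arXiv:1312.7187 — 2 statements merged into one kernel-verified Lean document; each statement's English description precedes it below -/
import Mathlib

section
/- Let P ⊆ ℝ² be a compact convex set with boundary ∂P, and let n_i, n_j ∈ ∂P. Let H be a closed half-plane with boundary line G. If neither n_i ∈ int(H) nor n_j ∈ int(H), then at least one of the two boundary arcs of ∂P joining n_i and n_j is disjoint from the interior of H. -/
open MeasureTheory Real Set
open scoped Classical Topology
set_option maxHeartbeats 1000000

noncomputable section

/-- The plane. -/
abbrev E2 := EuclideanSpace ℝ (Fin 2)

/-- Unit direction vector at angle θ. -/
def dir (θ : ℝ) : E2 := (WithLp.equiv 2 (Fin 2 → ℝ)).symm ![Real.cos θ, Real.sin θ]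

/-- Perimeter: 1-dimensional Hausdorff measure of the topological boundary. -/
def perim (K : Set E2) : ℝ := (μH[1] (frontier K)).toReal

/-- Kinematic measure of a parameter set (p, θ). -/
def km (S : Set (ℝ × ℝ)) : ℝ := (volume S).toReal

/-- Strip of breadth w with midline at signed distance p in direction θ. -/
def stripSet (p θ w : ℝ) : Set E2 := {x | |(inner ℝ x (dir θ) : ℝ) - p| ≤ w / 2}

/-- Half-plane `R_{G_B}`: the strip together with its right side. -/
def rgb (p θ w : ℝ) : Set E2 := {x | p - w / 2 ≤ (inner ℝ x (dir θ) : ℝ)}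

/-- Parameter set for the conditioning event B ∩ A₀ ≠ ∅. -/
def condSet (A₀ : Set E2) (w : ℝ) : Set (ℝ × ℝ) :=
  {q | q.2 ∈ Ico (-π) π ∧ (stripSet q.1 q.2 w ∩ A₀).Nonempty}

/-- Support function in direction θ. -/
def supp (K : Set E2) (θ : ℝ) : ℝ := sSup ((fun x => (inner ℝ x (dir θ) : ℝ)) '' K)




-- ### Auxiliary lemmas ###

section Aux

lemma dir_apply0 (θ : ℝ) : dir θ 0 = Real.cos θ := by
  simp [dir]

lemma dir_apply1 (θ : ℝ) : dir θ 1 = Real.sin θ := by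
  simp [dir]

lemma e2_ext {a b : E2} (h0 : a 0 = b 0) (h1 : a 1 = b 1) : a = b := by
  apply PiLp.ext
  intro i
  fin_cases i <;> assumption

lemma inner_dir (x : E2) (θ : ℝ) :
    (inner ℝ x (dir θ) : ℝ) = x 0 * Real.cos θ + x 1 * Real.sin θ := by
  rw [PiLp.inner_apply]
  simp [dir_apply0, dir_apply1, Fin.sum_univ_two, RCLike.inner_apply]
  ring

lemma norm_dir (θ : ℝ) : ‖dir θ‖ = 1 := by
  have h : (inner ℝ (dir θ) (dir θ) : ℝ) = 1 := by
    rw [inner_dir, dir_apply0, dir_apply1]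
    nlinarith [Real.sin_sq_add_cos_sq θ]
  rw [real_inner_self_eq_norm_sq] at h
  nlinarith [norm_nonneg (dir θ)]

lemma dir_ne_zero (θ : ℝ) : dir θ ≠ 0 := by
  intro h
  have := norm_dir θ
  rw [h, norm_zero] at this
  norm_num at this

lemma dir_add_pi (θ : ℝ) : dir (θ + π) = -dir θ := by
  apply e2_ext <;>
    simp [dir_apply0, dir_apply1, Real.cos_add_pi, Real.sin_add_pi, PiLp.neg_apply]

lemma dir_add_two_pi (θ : ℝ) : dir (θ + 2 * π) = dir θ := by
  apply e2_ext <;>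
    simp [dir_apply0, dir_apply1, Real.cos_add_two_pi, Real.sin_add_two_pi]

lemma continuous_dir : Continuous dir := by
  have h0 : dir = fun θ => Real.cos θ • dir 0 + Real.sin θ • dir (π/2) := by
    funext θ
    apply e2_ext <;>
      simp [dir_apply0, dir_apply1, PiLp.add_apply, PiLp.smul_apply]
  rw [h0]
  exact (Real.continuous_cos.smul continuous_const).add
    (Real.continuous_sin.smul continuous_const)

lemma dir_combo {θ1 θ2 θ : ℝ} :
    Real.sin (θ2 - θ1) • dir θ = Real.sin (θ2 - θ) • dir θ1 + Real.sin (θ - θ1) • dir θ2 := by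
  apply e2_ext <;>
    · simp only [PiLp.add_apply, PiLp.smul_apply, dir_apply0, dir_apply1, smul_eq_mul,
        Real.sin_sub, Real.cos_sub]
      ring

lemma exists_angle (v : E2) (hv : ‖v‖ = 1) : ∃ θ ∈ Icc (-π) π, dir θ = v := by
  have h2 : (v 0) ^ 2 + (v 1) ^ 2 = 1 := by
    have h := EuclideanSpace.norm_eq v
    rw [hv] at h
    have h' : Real.sqrt (∑ i : Fin 2, ‖v i‖ ^ 2) = 1 := h.symm
    have := Real.sqrt_eq_one.mp h'
    simpa [Fin.sum_univ_two, Real.norm_eq_abs, sq_abs] using this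
  have hle : -1 ≤ v 0 ∧ v 0 ≤ 1 := by constructor <;> nlinarith [sq_nonneg (v 1)]
  have hc := Real.cos_arccos hle.1 hle.2
  have hs := Real.sin_arccos (v 0)
  have hsq : Real.sqrt (1 - v 0 ^ 2) = |v 1| := by
    rw [show 1 - v 0 ^ 2 = (v 1) ^ 2 by linarith, Real.sqrt_sq_eq_abs]
  rcases le_or_gt 0 (v 1) with h1 | h1
  · refine ⟨Real.arccos (v 0), ⟨by linarith [Real.arccos_nonneg (v 0), Real.pi_pos],
      Real.arccos_le_pi (v 0)⟩, ?_⟩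
    apply e2_ext
    · rw [dir_apply0, hc]
    · rw [dir_apply1, hs, hsq, abs_of_nonneg h1]
  · refine ⟨-Real.arccos (v 0), ⟨by linarith [Real.arccos_le_pi (v 0)],
      by linarith [Real.arccos_nonneg (v 0), Real.pi_pos]⟩, ?_⟩
    apply e2_ext
    · rw [dir_apply0, Real.cos_neg, hc]
    · rw [dir_apply1, Real.sin_neg, hs, hsq, abs_of_neg h1]; ring

lemma halfspace_interior (u : E2) (hu : u ≠ 0) (c : ℝ) :
    interior {x : E2 | c ≤ (inner ℝ x u : ℝ)} = {x : E2 | c < (inner ℝ x u : ℝ)} := by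
  have hset : {x : E2 | c ≤ (inner ℝ x u : ℝ)} = (innerSL ℝ u) ⁻¹' (Ici c) := by
    ext x
    simp only [innerSL_apply_apply, mem_preimage, mem_Ici, mem_setOf_eq, real_inner_comm]
  have hset2 : {x : E2 | c < (inner ℝ x u : ℝ)} = (innerSL ℝ u) ⁻¹' (Ioi c) := by
    ext x
    simp only [innerSL_apply_apply, mem_preimage, mem_Ioi, mem_setOf_eq, real_inner_comm]
  have hne : (inner ℝ u u : ℝ) ≠ 0 := by
    rw [Ne, inner_self_eq_zero]
    exact hu
  have hsurj : Function.Surjective (innerSL ℝ u) := by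
    intro r
    refine ⟨(r / (inner ℝ u u : ℝ)) • u, ?_⟩
    rw [innerSL_apply_apply, real_inner_smul_right]
    exact div_mul_cancel₀ r hne
  have hopen : IsOpenMap (innerSL ℝ u) := (innerSL ℝ u).isOpenMap hsurj
  rw [hset, hset2,
    ← hopen.preimage_interior_eq_interior_preimage (innerSL ℝ u).continuous (Ici c),
    interior_Ici]

/-- The radial boundary parametrization. -/
def bpt (P : Set E2) (θ : ℝ) : E2 := (gauge P (dir θ))⁻¹ • dir θ

section keylemmas
variable {P : Set E2} {u : E2} {c : ℝ}

lemma bpt_inner (P : Set E2) (θ : ℝ) {u : E2} :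
    (inner ℝ (bpt P θ) u : ℝ) = (gauge P (dir θ))⁻¹ * (inner ℝ (dir θ) u : ℝ) := by
  rw [bpt, real_inner_smul_left]

lemma gauge_dir_pos (hnhds : P ∈ 𝓝 (0:E2)) (hbdd : Bornology.IsVonNBounded ℝ P)
    (θ : ℝ) : 0 < gauge P (dir θ) :=
  (gauge_pos (absorbent_nhds_zero hnhds) hbdd).mpr (dir_ne_zero θ)

lemma bpt_mem_frontier (hPc : Convex ℝ P) (hnhds : P ∈ 𝓝 (0:E2))
    (hbdd : Bornology.IsVonNBounded ℝ P) (θ : ℝ) : bpt P θ ∈ frontier P := by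
  rw [← gauge_eq_one_iff_mem_frontier hPc hnhds, bpt,
    gauge_smul_of_nonneg (inv_nonneg.mpr (gauge_dir_pos hnhds hbdd θ).le), smul_eq_mul]
  exact inv_mul_cancel₀ (gauge_dir_pos hnhds hbdd θ).ne'

lemma continuous_bpt (hPc : Convex ℝ P) (hnhds : P ∈ 𝓝 (0:E2))
    (hbdd : Bornology.IsVonNBounded ℝ P) : Continuous (bpt P) :=
  (((continuous_gauge hPc hnhds).comp continuous_dir).inv₀
    fun θ => (gauge_dir_pos hnhds hbdd θ).ne').smul continuous_dir

lemma bpt_periodic (θ : ℝ) : bpt P (θ + 2 * π) = bpt P θ := by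
  rw [bpt, bpt, dir_add_two_pi]

lemma cone_lemma (hPc : Convex ℝ P) (hnhds : P ∈ 𝓝 (0:E2))
    (hbdd : Bornology.IsVonNBounded ℝ P) (hc : 0 < c) {θ1 θ2 θ : ℝ} (hθ1 : θ1 ≤ θ) (hθ2 : θ ≤ θ2)
    (hltpi : θ2 - θ1 < π) (hb1 : c < (inner ℝ (bpt P θ1) u : ℝ))
    (hb2 : c < (inner ℝ (bpt P θ2) u : ℝ)) : c < (inner ℝ (bpt P θ) u : ℝ) := by
  have habs : Absorbent ℝ P := absorbent_nhds_zero hnhds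
  rcases eq_or_lt_of_le (hθ1.trans hθ2) with heq | hlt12
  · have hθeq : θ = θ1 := le_antisymm (heq ▸ hθ2) hθ1
    rwa [hθeq]
  have hr1p : 0 < gauge P (dir θ1) := gauge_dir_pos hnhds hbdd θ1
  have hr2p : 0 < gauge P (dir θ2) := gauge_dir_pos hnhds hbdd θ2
  set r1 : ℝ := gauge P (dir θ1)
  set r2 : ℝ := gauge P (dir θ2)
  set x1 : E2 := bpt P θ1 with hx1
  set x2 : E2 := bpt P θ2 with hx2
  have hd1 : dir θ1 = r1 • x1 := by rw [hx1, bpt, smul_inv_smul₀ hr1p.ne']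
  have hd2 : dir θ2 = r2 • x2 := by rw [hx2, bpt, smul_inv_smul₀ hr2p.ne']
  set a := Real.sin (θ2 - θ) with ha'
  set b := Real.sin (θ - θ1) with hb'
  set σ := Real.sin (θ2 - θ1) with hσ'
  have ha : 0 ≤ a := Real.sin_nonneg_of_nonneg_of_le_pi (by linarith) (by linarith)
  have hb : 0 ≤ b := Real.sin_nonneg_of_nonneg_of_le_pi (by linarith) (by linarith)
  have hσ : 0 < σ := Real.sin_pos_of_pos_of_lt_pi (by linarith) (by linarith)
  have hiden : σ • dir θ = (a * r1) • x1 + (b * r2) • x2 := by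
    rw [← smul_smul, ← smul_smul, ← hd1, ← hd2]
    exact dir_combo
  set s := a * r1 + b * r2 with hs'
  have hs0 : 0 ≤ s := by positivity
  have hs : 0 < s := by
    rcases hs0.eq_or_lt with hz | hp
    · exfalso
      have h1 : a * r1 = 0 := by nlinarith [mul_nonneg ha hr1p.le, mul_nonneg hb hr2p.le]
      have h2 : b * r2 = 0 := by nlinarith [mul_nonneg ha hr1p.le, mul_nonneg hb hr2p.le]
      rw [h1, h2] at hiden
      simp only [zero_smul, add_zero] at hiden
      rcases smul_eq_zero.mp hiden with h | h
      · exact hσ.ne' h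
      · exact dir_ne_zero θ h
    · exact hp
  set t := a * r1 / s with ht'
  have ht0 : 0 ≤ t := by positivity
  have ht1 : t ≤ 1 := by
    rw [ht', div_le_one hs]
    nlinarith [mul_nonneg hb hr2p.le]
  set y : E2 := t • x1 + (1 - t) • x2 with hy'
  have hst : s • (t • x1) = (a * r1) • x1 := by
    rw [smul_smul, ht']
    congr 1
    field_simp
  have hst2 : s • ((1 - t) • x2) = (b * r2) • x2 := by
    rw [smul_smul, ht']
    congr 1
    field_simp
    ring
  have hyid : σ • dir θ = s • y := by
    rw [hy', smul_add, hst, hst2, hiden]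
  have hdirθ : dir θ = (σ⁻¹ * s) • y := by
    rw [← smul_smul, ← hyid, inv_smul_smul₀ hσ.ne']
  have hKpos : 0 < σ⁻¹ * s := by positivity
  have hgauy : gauge P y ≤ 1 := by
    calc gauge P y ≤ gauge P (t • x1) + gauge P ((1 - t) • x2) := gauge_add_le hPc habs _ _
      _ = t * gauge P x1 + (1 - t) * gauge P x2 := by
          rw [gauge_smul_of_nonneg ht0, gauge_smul_of_nonneg (by linarith : (0:ℝ) ≤ 1 - t),
            smul_eq_mul, smul_eq_mul]
      _ = 1 := by
          rw [(gauge_eq_one_iff_mem_frontier hPc hnhds).mpr (bpt_mem_frontier hPc hnhds hbdd θ1),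
            (gauge_eq_one_iff_mem_frontier hPc hnhds).mpr (bpt_mem_frontier hPc hnhds hbdd θ2)]
          ring
  have hfy : c < (inner ℝ y u : ℝ) := by
    have hyval : (inner ℝ y u : ℝ) = t * inner ℝ x1 u + (1 - t) * inner ℝ x2 u := by
      rw [hy']
      simp only [inner_add_left, real_inner_smul_left]
    rw [hyval]
    rcases ht0.eq_or_lt with hz | hp
    · rw [← hz]
      simpa using hb2
    · have e1 : t * c < t * (inner ℝ x1 u : ℝ) := by
        exact (mul_lt_mul_iff_right₀ hp).mpr hb1
      have e2 : (1 - t) * c ≤ (1 - t) * (inner ℝ x2 u : ℝ) :=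
        mul_le_mul_of_nonneg_left hb2.le (by linarith)
      have e3 : t * c + (1 - t) * c = c := by ring
      linarith
  have hG : gauge P (dir θ) = (σ⁻¹ * s) * gauge P y := by
    rw [hdirθ, gauge_smul_of_nonneg hKpos.le, smul_eq_mul]
  have hGK : gauge P (dir θ) ≤ σ⁻¹ * s := by
    rw [hG]
    nlinarith
  have hfdir : (inner ℝ (dir θ) u : ℝ) = (σ⁻¹ * s) * inner ℝ y u := by
    rw [hdirθ, real_inner_smul_left]
  rw [bpt_inner, hfdir, inv_mul_eq_div, lt_div_iff₀ (gauge_dir_pos hnhds hbdd θ)]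
  calc c * gauge P (dir θ) ≤ c * (σ⁻¹ * s) := mul_le_mul_of_nonneg_left hGK hc.le
    _ < (inner ℝ y u : ℝ) * (σ⁻¹ * s) := mul_lt_mul_of_pos_right hfy hKpos
    _ = σ⁻¹ * s * (inner ℝ y u : ℝ) := mul_comm _ _

lemma antip_lemma (hPc : Convex ℝ P) (hnhds : P ∈ 𝓝 (0:E2))
    (hbdd : Bornology.IsVonNBounded ℝ P) (hc : 0 < c) {θ : ℝ} (hb : c < (inner ℝ (bpt P θ) u : ℝ)) :
    (inner ℝ (bpt P (θ + π)) u : ℝ) ≤ c := by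
  have hGpos : 0 < gauge P (dir θ) := gauge_dir_pos hnhds hbdd θ
  have hFpos : 0 < (inner ℝ (dir θ) u : ℝ) := by
    rw [bpt_inner] at hb
    by_contra hF
    push_neg at hF
    have h1 : (gauge P (dir θ))⁻¹ * (inner ℝ (dir θ) u : ℝ) ≤ 0 :=
      mul_nonpos_of_nonneg_of_nonpos (inv_nonneg.mpr hGpos.le) hF
    linarith
  have hG'pos : 0 < gauge P (dir (θ + π)) := gauge_dir_pos hnhds hbdd (θ + π)
  rw [bpt_inner, dir_add_pi, inner_neg_left]
  rw [dir_add_pi] at hG'pos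
  have h1 : (gauge P (-dir θ))⁻¹ * -(inner ℝ (dir θ) u : ℝ) ≤ 0 :=
    mul_nonpos_of_nonneg_of_nonpos (inv_nonneg.mpr hG'pos.le) (by linarith)
  linarith

end keylemmas

lemma key (P : Set E2) (hP : IsCompact P) (hPc : Convex ℝ P)
    (h0 : (0:E2) ∈ interior P) (u : E2) (c : ℝ) (hc : 0 < c)
    (ni nj : E2) (hni : ni ∈ frontier P) (hnj : nj ∈ frontier P)
    (hfi : (inner ℝ ni u : ℝ) ≤ c) (hfj : (inner ℝ nj u : ℝ) ≤ c) :
    ∃ A : Set E2, IsConnected A ∧ A ⊆ frontier P ∧ ni ∈ A ∧ nj ∈ A ∧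
      ∀ x ∈ A, (inner ℝ x u : ℝ) ≤ c := by
  have hnhds : P ∈ 𝓝 (0:E2) := mem_interior_iff_mem_nhds.mp h0
  have habs : Absorbent ℝ P := absorbent_nhds_zero hnhds
  have hbdd : Bornology.IsVonNBounded ℝ P :=
    NormedSpace.isVonNBounded_of_isBounded ℝ hP.isBounded
  -- angles for ni and nj
  have hangle : ∀ n : E2, n ∈ frontier P → ∃ θ ∈ Icc (-π) π, bpt P θ = n := by
    intro n hn
    have hg1 : gauge P n = 1 := (gauge_eq_one_iff_mem_frontier hPc hnhds).mpr hn
    have hn0 : n ≠ 0 := by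
      intro hz
      rw [hz, gauge_zero] at hg1
      norm_num at hg1
    have hnorm : 0 < ‖n‖ := norm_pos_iff.mpr hn0
    obtain ⟨θ, hθmem, hθeq⟩ := exists_angle (‖n‖⁻¹ • n)
      (by rw [norm_smul, norm_inv, norm_norm, inv_mul_cancel₀ hnorm.ne'])
    refine ⟨θ, hθmem, ?_⟩
    have hgd' : gauge P (dir θ) = ‖n‖⁻¹ := by
      rw [hθeq, gauge_smul_of_nonneg (inv_nonneg.mpr hnorm.le), smul_eq_mul, hg1, mul_one]
    rw [bpt, hgd', hθeq, inv_inv, smul_smul, mul_inv_cancel₀ hnorm.ne', one_smul]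
  obtain ⟨θi, hθimem, hθieq⟩ := hangle ni hni
  obtain ⟨θj, hθjmem, hθjeq⟩ := hangle nj hnj
  have main : ∀ θa θb : ℝ, θa ∈ Icc (-π) π → θb ∈ Icc (-π) π → θa ≤ θb →
      (inner ℝ (bpt P θa) u : ℝ) ≤ c → (inner ℝ (bpt P θb) u : ℝ) ≤ c →
      ∃ A : Set E2, IsConnected A ∧ A ⊆ frontier P ∧ bpt P θa ∈ A ∧ bpt P θb ∈ A ∧
        ∀ x ∈ A, (inner ℝ x u : ℝ) ≤ c := by
    intro θa θb hamem hbmem hab hfa hfb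
    have hwide : θb ≤ θa + 2 * π := by
      have h1 : -π ≤ θa := hamem.1
      have h2 : θb ≤ π := hbmem.2
      linarith
    by_cases hU : ∃ φ ∈ Icc θa θb, c < (inner ℝ (bpt P φ) u : ℝ)
    · obtain ⟨φ1, hφ1mem, hφ1⟩ := hU
      have hclean : ∀ φ ∈ Icc θb (θa + 2 * π), (inner ℝ (bpt P φ) u : ℝ) ≤ c := by
        intro φ2 hφ2mem
        by_contra hbad
        push_neg at hbad
        have h1a : θa ≤ φ1 := hφ1mem.1
        have h1b : φ1 ≤ θb := hφ1mem.2
        have h2a : θb ≤ φ2 := hφ2mem.1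
        have h2b : φ2 ≤ θa + 2 * π := hφ2mem.2
        rcases lt_trichotomy (φ2 - φ1) π with hd | hd | hd
        · exact absurd (cone_lemma hPc hnhds hbdd hc h1b h2a hd hφ1 hbad) (not_lt.mpr hfb)
        · have heq : φ2 = φ1 + π := by linarith
          exact absurd (heq ▸ hbad) (not_lt.mpr (antip_lemma hPc hnhds hbdd hc hφ1))
        · have hper1 : (inner ℝ (bpt P (φ1 + 2 * π)) u : ℝ) = (inner ℝ (bpt P φ1) u : ℝ) := by
            rw [bpt_periodic]
          have hpera : (inner ℝ (bpt P (θa + 2 * π)) u : ℝ) = (inner ℝ (bpt P θa) u : ℝ) := by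
            rw [bpt_periodic]
          have := cone_lemma hPc hnhds hbdd hc (θ1 := φ2) (θ2 := φ1 + 2 * π)
            (θ := θa + 2 * π) h2b (by linarith) (by linarith)
            hbad (by rw [hper1]; exact hφ1)
          rw [hpera] at this
          exact absurd this (not_lt.mpr hfa)
      refine ⟨bpt P '' Icc θb (θa + 2 * π), ?_, ?_, ?_, ?_, ?_⟩
      · exact (isConnected_Icc hwide).image _ (continuous_bpt hPc hnhds hbdd).continuousOn
      · rintro x ⟨θ, _, rfl⟩
        exact bpt_mem_frontier hPc hnhds hbdd θ
      · exact ⟨θa + 2 * π, ⟨hwide, le_refl _⟩, bpt_periodic θa⟩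
      · exact ⟨θb, ⟨le_refl _, hwide⟩, rfl⟩
      · rintro x ⟨θ, hθ, rfl⟩
        exact hclean θ hθ
    · push_neg at hU
      refine ⟨bpt P '' Icc θa θb, ?_, ?_, ?_, ?_, ?_⟩
      · exact (isConnected_Icc hab).image _ (continuous_bpt hPc hnhds hbdd).continuousOn
      · rintro x ⟨θ, _, rfl⟩
        exact bpt_mem_frontier hPc hnhds hbdd θ
      · exact ⟨θa, ⟨le_refl _, hab⟩, rfl⟩
      · exact ⟨θb, ⟨hab, le_refl _⟩, rfl⟩
      · rintro x ⟨θ, hθ, rfl⟩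
        exact hU θ hθ
  rcases le_total θi θj with hij | hij
  · obtain ⟨A, h1, h2, h3, h4, h5⟩ := main θi θj hθimem hθjmem hij
      (by rw [hθieq]; exact hfi) (by rw [hθjeq]; exact hfj)
    exact ⟨A, h1, h2, hθieq ▸ h3, hθjeq ▸ h4, h5⟩
  · obtain ⟨A, h1, h2, h3, h4, h5⟩ := main θj θi hθjmem hθimem hij
      (by rw [hθjeq]; exact hfj) (by rw [hθieq]; exact hfi)
    exact ⟨A, h1, h2, hθieq ▸ h4, hθjeq ▸ h3, h5⟩

lemma inner_linear (u : E2) : IsLinearMap ℝ (fun x : E2 => (inner ℝ x u : ℝ)) :=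
  ⟨fun x y => inner_add_left x y u, fun c x => real_inner_smul_left x u c⟩


/-- If neither endpoint lies in the open half-plane, then some boundary arc
(a connected subset of ∂P joining nᵢ and nⱼ) is disjoint from the open half-plane. -/
theorem stmt8 (P : Set E2) (hP : IsCompact P) (hPc : Convex ℝ P)
    (ni nj : E2) (hni : ni ∈ frontier P) (hnj : nj ∈ frontier P)
    (u : E2) (hu : ‖u‖ = 1) (c : ℝ)
    (hi : ni ∉ interior {x : E2 | c ≤ (inner ℝ x u : ℝ)})
    (hj : nj ∉ interior {x : E2 | c ≤ (inner ℝ x u : ℝ)}) :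
    ∃ A : Set E2, IsConnected A ∧ A ⊆ frontier P ∧ ni ∈ A ∧ nj ∈ A ∧
      A ∩ interior {x : E2 | c ≤ (inner ℝ x u : ℝ)} = ∅ := by
  have hu0 : u ≠ 0 := by
    intro hz
    rw [hz, norm_zero] at hu
    norm_num at hu
  rw [halfspace_interior u hu0 c] at hi hj ⊢
  have hfi : (inner ℝ ni u : ℝ) ≤ c := not_lt.mp (by simpa using hi)
  have hfj : (inner ℝ nj u : ℝ) ≤ c := not_lt.mp (by simpa using hj)
  -- it suffices to produce A with ∀ x ∈ A, inner ℝ x u ≤ c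
  suffices hsuf : ∃ A : Set E2, IsConnected A ∧ A ⊆ frontier P ∧ ni ∈ A ∧ nj ∈ A ∧
      ∀ x ∈ A, (inner ℝ x u : ℝ) ≤ c by
    obtain ⟨A, h1, h2, h3, h4, h5⟩ := hsuf
    refine ⟨A, h1, h2, h3, h4, ?_⟩
    ext x
    simp only [mem_inter_iff, mem_setOf_eq, mem_empty_iff_false, iff_false, not_and]
    intro hx
    exact not_lt.mpr (h5 x hx)
  have hniP : ni ∈ P := (IsClosed.frontier_subset hP.isClosed) hni
  have hnjP : nj ∈ P := (IsClosed.frontier_subset hP.isClosed) hnj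
  by_cases hint : (interior P).Nonempty
  · by_cases hz : ∃ z ∈ interior P, (inner ℝ z u : ℝ) < c
    · -- main case : translate and use `key`
      obtain ⟨z, hz1, hz2⟩ := hz
      set Q : Set E2 := (fun x => -z + x) '' P with hQ
      have hQc : Convex ℝ Q := hPc.translate (-z)
      have hhomeo : Q = (Homeomorph.addLeft (-z)) '' P := rfl
      have hQcomp : IsCompact Q := hP.image (Homeomorph.addLeft (-z)).continuous
      have hQfr : frontier Q = (fun x => -z + x) '' frontier P := by
        rw [hhomeo, ← Homeomorph.image_frontier]
        rfl
      have hQint : interior Q = (fun x => -z + x) '' interior P := by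
        rw [hhomeo, ← Homeomorph.image_interior]
        rfl
      have h0Q : (0 : E2) ∈ interior Q := by
        rw [hQint]
        exact ⟨z, hz1, by simp⟩
      set c' := c - (inner ℝ z u : ℝ) with hc'
      have hc'pos : 0 < c' := by rw [hc']; linarith
      have hfr' : ∀ n : E2, n ∈ frontier P → -z + n ∈ frontier Q := by
        intro n hn
        rw [hQfr]
        exact ⟨n, hn, rfl⟩
      have hin' : ∀ n : E2, (inner ℝ n u : ℝ) ≤ c → (inner ℝ (-z + n) u : ℝ) ≤ c' := by
        intro n hn
        rw [inner_add_left, inner_neg_left]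
        simp only [hc']
        linarith
      obtain ⟨A, h1, h2, h3, h4, h5⟩ := key Q hQcomp hQc h0Q u c' hc'pos
        (-z + ni) (-z + nj) (hfr' ni hni) (hfr' nj hnj) (hin' ni hfi) (hin' nj hfj)
      refine ⟨(fun x => z + x) '' A, h1.image _ (continuous_const.add continuous_id).continuousOn,
        ?_, ⟨-z + ni, h3, by simp⟩, ⟨-z + nj, h4, by simp⟩, ?_⟩
      · rintro x ⟨a, ha, rfl⟩
        have := h2 ha
        rw [hQfr] at this
        obtain ⟨w, hw, hweq⟩ := this
        rw [← hweq]
        simpa using hw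
      · rintro x ⟨a, ha, rfl⟩
        have := h5 a ha
        rw [inner_add_left]
        simp only [hc'] at this
        linarith
    · -- no interior point below level c : P lies in {c ≤ inner ℝ · u}
      push_neg at hz
      have hPge : ∀ x ∈ P, c ≤ (inner ℝ x u : ℝ) := by
        intro x hx
        by_contra hlt
        push_neg at hlt
        obtain ⟨w, hw⟩ := hint
        have hcont : Continuous (fun t : ℝ => (inner ℝ ((1 - t) • x + t • w) u : ℝ)) := by
          apply Continuous.inner _ continuous_const
          exact ((continuous_const.sub continuous_id).smul continuous_const).add
            (continuous_id.smul continuous_const)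
        have hf0 : (inner ℝ ((1 - (0:ℝ)) • x + (0:ℝ) • w) u : ℝ) = inner ℝ x u := by
          norm_num
        have hev : ∀ᶠ t : ℝ in 𝓝 0, (inner ℝ ((1 - t) • x + t • w) u : ℝ) < c := by
          apply Filter.Tendsto.eventually_lt_const _ (hcont.tendsto 0)
          rw [hf0]
          exact hlt
        have h2 : Ioo (0:ℝ) 1 ∈ 𝓝[>] (0:ℝ) := Ioo_mem_nhdsGT_of_mem ⟨le_rfl, zero_lt_one⟩
        obtain ⟨t, htv, ht0, ht1⟩ :=
          ((hev.filter_mono nhdsWithin_le_nhds).and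
            (Filter.eventually_of_mem h2 fun t ht => ht)).exists
        have hmem : (1 - t) • x + t • w ∈ interior P :=
          hPc.combo_closure_interior_mem_interior (subset_closure hx) hw
            (by linarith) ht0 (by ring)
        exact absurd htv (not_lt.mpr (hz _ hmem))
      refine ⟨P ∩ {x : E2 | (inner ℝ x u : ℝ) ≤ c}, ?_, ?_, ⟨hniP, hfi⟩, ⟨hnjP, hfj⟩,
        fun x hx => hx.2⟩
      · exact (hPc.inter (convex_halfSpace_le (inner_linear u) c)).isConnected
          ⟨ni, hniP, hfi⟩
      · rintro x ⟨hx1, hx2⟩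
        simp only [mem_setOf_eq] at hx2
        rw [frontier, hP.isClosed.closure_eq]
        refine ⟨hx1, fun hxint => ?_⟩
        obtain ⟨ε, hε, hball⟩ := Metric.mem_nhds_iff.mp (mem_interior_iff_mem_nhds.mp hxint)
        have hyP : x - (ε/2) • u ∈ P := by
          apply hball
          rw [Metric.mem_ball, dist_eq_norm]
          have : x - (ε/2) • u - x = -((ε/2) • u) := by abel
          rw [this, norm_neg, norm_smul, hu, mul_one, Real.norm_eq_abs,
            abs_of_pos (by linarith)]
          linarith
        have hyval : (inner ℝ (x - (ε/2) • u) u : ℝ) = inner ℝ x u - ε/2 := by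
          rw [inner_sub_left, real_inner_smul_left, real_inner_self_eq_norm_sq, hu]
          ring
        have := hPge _ hyP
        rw [hyval] at this
        have := hPge x hx1
        linarith
  · -- interior P is empty : frontier P = P and the segment works
    have hfr : frontier P = P := by
      rw [frontier, hP.isClosed.closure_eq, not_nonempty_iff_eq_empty.mp hint, diff_empty]
    refine ⟨segment ℝ ni nj, ?_, ?_, left_mem_segment ℝ ni nj, right_mem_segment ℝ ni nj, ?_⟩
    · exact (convex_segment ni nj).isConnected ⟨ni, left_mem_segment ℝ ni nj⟩
    · rw [hfr]
      exact hPc.segment_subset hniP hnjP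
    · intro x hx
      exact (convex_halfSpace_le (inner_linear u) c).segment_subset hfi hfj hx
end Aux
end
end

section
/- Let P ⊆ ℝ² be a compact convex set, n_i, n_j ∈ ∂P, and H a closed half-plane. Say i ↔ j holds if at least one of the two boundary arcs of ∂P from n_i to n_j is disjoint from H. Then i ↔ j holds if and only if the segment [n_i, n_j] is disjoint from H. -/
open MeasureTheory Real Set
open scoped Classical

noncomputable section

def perpv (u : E2) : E2 := (WithLp.equiv 2 (Fin 2 → ℝ)).symm ![-(u 1), u 0]
lemma inner_expand (x y : E2) : (inner ℝ x y : ℝ) = x 0 * y 0 + x 1 * y 1 := by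
  simp [PiLp.inner_apply, Fin.sum_univ_two, RCLike.inner_apply, mul_comm]
lemma perpv_apply0 (u : E2) : perpv u 0 = -(u 1) := rfl
lemma perpv_apply1 (u : E2) : perpv u 1 = u 0 := rfl
lemma norm_sq_one (u : E2) (hu : ‖u‖ = 1) : u 0 ^ 2 + u 1 ^ 2 = 1 := by
  have h := real_inner_self_eq_norm_sq u
  rw [hu, inner_expand] at h; nlinarith [h]
lemma basis_expand (u : E2) (hu : ‖u‖ = 1) (x : E2) :
    x = (inner ℝ x u : ℝ) • u + (inner ℝ x (perpv u) : ℝ) • perpv u := by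
  have h1 := norm_sq_one u hu
  ext i; fin_cases i
  · show x 0 = _ ; simp [inner_expand, perpv_apply0, perpv_apply1]
    linear_combination -x 0 * h1
  · show x 1 = _ ; simp [inner_expand, perpv_apply0, perpv_apply1]
    linear_combination -x 1 * h1
def pt (u : E2) (t v : ℝ) : E2 := t • u + v • perpv u
lemma inner_pt_u (u : E2) (hu : ‖u‖ = 1) (t v : ℝ) : (inner ℝ (pt u t v) u : ℝ) = t := by
  have h1 := norm_sq_one u hu
  simp [pt, inner_expand, perpv_apply0, perpv_apply1]
  linear_combination t * h1
lemma inner_pt_w (u : E2) (hu : ‖u‖ = 1) (t v : ℝ) :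
    (inner ℝ (pt u t v) (perpv u) : ℝ) = v := by
  have h1 := norm_sq_one u hu
  simp [pt, inner_expand, perpv_apply0, perpv_apply1]
  linear_combination v * h1
lemma pt_eq_self (u : E2) (hu : ‖u‖ = 1) (x : E2) :
    pt u (inner ℝ x u : ℝ) (inner ℝ x (perpv u) : ℝ) = x := (basis_expand u hu x).symm
lemma continuous_pt (u : E2) : Continuous fun p : ℝ × ℝ => pt u p.1 p.2 := by
  unfold pt; fun_prop
lemma pt_combo (u : E2) (t₁ v₁ t₂ v₂ α β : ℝ) :
    α • pt u t₁ v₁ + β • pt u t₂ v₂ = pt u (α * t₁ + β * t₂) (α * v₁ + β * v₂) := by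
  unfold pt; module
lemma norm_perpv (u : E2) (hu : ‖u‖ = 1) : ‖perpv u‖ = 1 := by
  have h1 := norm_sq_one u hu
  rw [show (1:ℝ) = ‖u‖ from hu.symm]
  rw [EuclideanSpace.norm_eq, EuclideanSpace.norm_eq]
  congr 1
  simp [Fin.sum_univ_two, perpv_apply0, perpv_apply1]; ring

def Sl (P : Set E2) (u : E2) (t : ℝ) : Set ℝ := {v | pt u t v ∈ P}
def gfun (P : Set E2) (u : E2) (t : ℝ) : ℝ := sInf (Sl P u t)
def hfun (P : Set E2) (u : E2) (t : ℝ) : ℝ := sSup (Sl P u t)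
def fA (P : Set E2) (u : E2) : ℝ := sInf ((fun x => (inner ℝ x u : ℝ)) '' P)
def fB (P : Set E2) (u : E2) : ℝ := sSup ((fun x => (inner ℝ x u : ℝ)) '' P)

variable {P : Set E2} {u : E2}

lemma img_compact (hP : IsCompact P) : IsCompact ((fun x => (inner ℝ x u : ℝ)) '' P) :=
  hP.image (continuous_id.inner continuous_const)

lemma mem_Icc_fAB (hP : IsCompact P) {x : E2} (hx : x ∈ P) :
    (inner ℝ x u : ℝ) ∈ Icc (fA P u) (fB P u) := by
  have hc := img_compact (u := u) hP
  have hmem : (inner ℝ x u : ℝ) ∈ (fun x => (inner ℝ x u : ℝ)) '' P := ⟨x, hx, rfl⟩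
  exact ⟨csInf_le hc.bddBelow hmem, le_csSup hc.bddAbove hmem⟩

lemma exists_fA (hP : IsCompact P) (hne : P.Nonempty) :
    ∃ x ∈ P, (inner ℝ x u : ℝ) = fA P u := by
  obtain ⟨x, hx, hfx⟩ := (img_compact (u := u) hP).sInf_mem (hne.image _)
  exact ⟨x, hx, hfx⟩

lemma exists_fB (hP : IsCompact P) (hne : P.Nonempty) :
    ∃ x ∈ P, (inner ℝ x u : ℝ) = fB P u := by
  obtain ⟨x, hx, hfx⟩ := (img_compact (u := u) hP).sSup_mem (hne.image _)
  exact ⟨x, hx, hfx⟩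

lemma mem_Sl_self (hu : ‖u‖ = 1) {x : E2} (hx : x ∈ P) :
    (inner ℝ x (perpv u) : ℝ) ∈ Sl P u (inner ℝ x u : ℝ) := by
  show pt u _ _ ∈ P
  rw [pt_eq_self u hu]; exact hx

lemma Sl_nonempty (hP : IsCompact P) (hPc : Convex ℝ P) (hu : ‖u‖ = 1) (hne : P.Nonempty)
    {t : ℝ} (ht : t ∈ Icc (fA P u) (fB P u)) : (Sl P u t).Nonempty := by
  obtain ⟨pa, hpa, hfa⟩ := exists_fA (u := u) hP hne
  obtain ⟨pb, hpb, hfb⟩ := exists_fB (u := u) hP hne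
  rcases eq_or_lt_of_le (ht.1.trans ht.2) with h | h
  · have htA : t = fA P u := le_antisymm (h ▸ ht.2) ht.1
    refine ⟨(inner ℝ pa (perpv u) : ℝ), ?_⟩
    show pt u t _ ∈ P
    rw [htA, ← hfa, pt_eq_self u hu]; exact hpa
  · have hd : (0:ℝ) < fB P u - fA P u := sub_pos.mpr h
    set α := (fB P u - t) / (fB P u - fA P u) with hα
    set β := (t - fA P u) / (fB P u - fA P u) with hβ
    have hα0 : 0 ≤ α := div_nonneg (by linarith [ht.2]) hd.le
    have hβ0 : 0 ≤ β := div_nonneg (by linarith [ht.1]) hd.le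
    have hαβ : α + β = 1 := by
      rw [hα, hβ, ← add_div, div_eq_one_iff_eq hd.ne']; ring
    have hx : α • pa + β • pb ∈ P := hPc hpa hpb hα0 hβ0 hαβ
    have hfx : (inner ℝ (α • pa + β • pb) u : ℝ) = t := by
      rw [inner_add_left, real_inner_smul_left, real_inner_smul_left, hfa, hfb, hα, hβ]
      field_simp; ring
    refine ⟨(inner ℝ (α • pa + β • pb) (perpv u) : ℝ), ?_⟩
    have := mem_Sl_self (u := u) hu hx
    rwa [hfx] at this

lemma Sl_eq_preimage (t : ℝ) : Sl P u t = (fun v => pt u t v) ⁻¹' P := rfl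

lemma Sl_isClosed (hP : IsCompact P) (t : ℝ) : IsClosed (Sl P u t) := by
  rw [Sl_eq_preimage]
  exact hP.isClosed.preimage (by unfold pt; fun_prop)

lemma Sl_bddish (hP : IsCompact P) (hu : ‖u‖ = 1) :
    ∃ R : ℝ, ∀ t : ℝ, ∀ v ∈ Sl P u t, |v| ≤ R := by
  obtain ⟨R, hR⟩ := hP.isBounded.exists_norm_le
  refine ⟨R, fun t v hv => ?_⟩
  have h1 : |v| = |(inner ℝ (pt u t v) (perpv u) : ℝ)| := by rw [inner_pt_w u hu]
  rw [h1]
  calc |(inner ℝ (pt u t v) (perpv u) : ℝ)| ≤ ‖pt u t v‖ * ‖perpv u‖ := abs_real_inner_le_norm _ _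
    _ = ‖pt u t v‖ := by rw [norm_perpv u hu, mul_one]
    _ ≤ R := hR _ hv

lemma Sl_isCompact (hP : IsCompact P) (hu : ‖u‖ = 1) (t : ℝ) : IsCompact (Sl P u t) := by
  obtain ⟨R, hR⟩ := Sl_bddish (u := u) hP hu
  refine (isCompact_Icc (a := -R) (b := R)).of_isClosed_subset (Sl_isClosed hP t) ?_
  intro v hv
  exact abs_le.mp (hR t v hv)

lemma Sl_convex (hPc : Convex ℝ P) (t : ℝ) : Convex ℝ (Sl P u t) := by
  intro v1 hv1 v2 hv2 α β hα hβ hαβ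
  show pt u t _ ∈ P
  have := hPc hv1 hv2 hα hβ hαβ
  rwa [pt_combo, show α * t + β * t = t by rw [← add_mul, hαβ, one_mul]] at this

lemma gfun_mem (hP : IsCompact P) (hu : ‖u‖ = 1) {t : ℝ} (hne : (Sl P u t).Nonempty) :
    gfun P u t ∈ Sl P u t := (Sl_isCompact hP hu t).sInf_mem hne

lemma hfun_mem (hP : IsCompact P) (hu : ‖u‖ = 1) {t : ℝ} (hne : (Sl P u t).Nonempty) :
    hfun P u t ∈ Sl P u t := (Sl_isCompact hP hu t).sSup_mem hne

lemma Sl_subset_Icc (hP : IsCompact P) (hu : ‖u‖ = 1) {t v : ℝ} (hv : v ∈ Sl P u t) :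
    v ∈ Icc (gfun P u t) (hfun P u t) :=
  ⟨csInf_le (Sl_isCompact hP hu t).bddBelow hv, le_csSup (Sl_isCompact hP hu t).bddAbove hv⟩

lemma Icc_subset_Sl (hP : IsCompact P) (hPc : Convex ℝ P) (hu : ‖u‖ = 1)
    {t : ℝ} (hne : (Sl P u t).Nonempty) : Icc (gfun P u t) (hfun P u t) ⊆ Sl P u t := by
  have h1 := gfun_mem hP hu hne
  have h2 := hfun_mem hP hu hne
  exact (Sl_convex hPc t).ordConnected.out h1 h2

-- ## convexity of gfun / concavity of hfun
lemma gfun_combo (hP : IsCompact P) (hPc : Convex ℝ P) (hu : ‖u‖ = 1)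
    {t₁ t₂ β : ℝ} (h1 : (Sl P u t₁).Nonempty) (h2 : (Sl P u t₂).Nonempty)
    (hβ0 : 0 ≤ β) (hβ1 : β ≤ 1) :
    gfun P u ((1 - β) * t₁ + β * t₂) ≤ (1 - β) * gfun P u t₁ + β * gfun P u t₂ := by
  have m1 := gfun_mem hP hu h1
  have m2 := gfun_mem hP hu h2
  have m1' : pt u t₁ (gfun P u t₁) ∈ P := m1
  have m2' : pt u t₂ (gfun P u t₂) ∈ P := m2
  have hmem : (1 - β) * gfun P u t₁ + β * gfun P u t₂ ∈ Sl P u ((1 - β) * t₁ + β * t₂) := by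
    have hcombo := hPc m1' m2' (a := 1 - β) (b := β) (by linarith) hβ0 (by ring)
    show pt u _ _ ∈ P
    rwa [pt_combo] at hcombo
  exact csInf_le (Sl_isCompact hP hu _).bddBelow hmem

lemma hfun_combo (hP : IsCompact P) (hPc : Convex ℝ P) (hu : ‖u‖ = 1)
    {t₁ t₂ β : ℝ} (h1 : (Sl P u t₁).Nonempty) (h2 : (Sl P u t₂).Nonempty)
    (hβ0 : 0 ≤ β) (hβ1 : β ≤ 1) :
    (1 - β) * hfun P u t₁ + β * hfun P u t₂ ≤ hfun P u ((1 - β) * t₁ + β * t₂) := by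
  have m1 := hfun_mem hP hu h1
  have m2 := hfun_mem hP hu h2
  have m1' : pt u t₁ (hfun P u t₁) ∈ P := m1
  have m2' : pt u t₂ (hfun P u t₂) ∈ P := m2
  have hmem : (1 - β) * hfun P u t₁ + β * hfun P u t₂ ∈ Sl P u ((1 - β) * t₁ + β * t₂) := by
    have hcombo := hPc m1' m2' (a := 1 - β) (b := β) (by linarith) hβ0 (by ring)
    show pt u _ _ ∈ P
    rwa [pt_combo] at hcombo
  exact le_csSup (Sl_isCompact hP hu _).bddAbove hmem

-- global bound
lemma gh_bound (hP : IsCompact P) (hPc : Convex ℝ P) (hu : ‖u‖ = 1) (hne : P.Nonempty) :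
    ∃ R : ℝ, 0 < R ∧ ∀ t ∈ Icc (fA P u) (fB P u),
      |gfun P u t| ≤ R ∧ |hfun P u t| ≤ R := by
  obtain ⟨R, hR⟩ := Sl_bddish (u := u) hP hu
  refine ⟨max R 1, lt_of_lt_of_le one_pos (le_max_right _ _), fun t ht => ?_⟩
  have hne' := Sl_nonempty hP hPc hu hne ht
  exact ⟨(hR t _ (gfun_mem hP hu hne')).trans (le_max_left _ _),
    (hR t _ (hfun_mem hP hu hne')).trans (le_max_left _ _)⟩

lemma gfun_est (hP : IsCompact P) (hPc : Convex ℝ P) (hu : ‖u‖ = 1) (hne : P.Nonempty)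
    {R : ℝ} (hR : ∀ t ∈ Icc (fA P u) (fB P u), |gfun P u t| ≤ R ∧ |hfun P u t| ≤ R)
    {t₀ e β : ℝ} (ht0 : t₀ ∈ Icc (fA P u) (fB P u)) (he : e ∈ Icc (fA P u) (fB P u))
    (hβ0 : 0 ≤ β) (hβ1 : β ≤ 1) :
    gfun P u ((1 - β) * t₀ + β * e) ≤ gfun P u t₀ + β * (2 * R) := by
  have h1 := Sl_nonempty hP hPc hu hne ht0
  have h2 := Sl_nonempty hP hPc hu hne he
  have hc := gfun_combo hP hPc hu h1 h2 hβ0 hβ1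
  have b1 := (hR t₀ ht0).1
  have b2 := (hR e he).1
  rw [abs_le] at b1 b2
  nlinarith [hc, b1.1, b1.2, b2.1, b2.2]

lemma hfun_est (hP : IsCompact P) (hPc : Convex ℝ P) (hu : ‖u‖ = 1) (hne : P.Nonempty)
    {R : ℝ} (hR : ∀ t ∈ Icc (fA P u) (fB P u), |gfun P u t| ≤ R ∧ |hfun P u t| ≤ R)
    {t₀ e β : ℝ} (ht0 : t₀ ∈ Icc (fA P u) (fB P u)) (he : e ∈ Icc (fA P u) (fB P u))
    (hβ0 : 0 ≤ β) (hβ1 : β ≤ 1) :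
    hfun P u t₀ - β * (2 * R) ≤ hfun P u ((1 - β) * t₀ + β * e) := by
  have h1 := Sl_nonempty hP hPc hu hne ht0
  have h2 := Sl_nonempty hP hPc hu hne he
  have hc := hfun_combo hP hPc hu h1 h2 hβ0 hβ1
  have b1 := (hR t₀ ht0).2
  have b2 := (hR e he).2
  rw [abs_le] at b1 b2
  nlinarith [hc, b1.1, b1.2, b2.1, b2.2]

lemma gfun_usc (hP : IsCompact P) (hPc : Convex ℝ P) (hu : ‖u‖ = 1) (hne : P.Nonempty)
    {t₀ : ℝ} (ht0 : t₀ ∈ Icc (fA P u) (fB P u)) {ε : ℝ} (hε : 0 < ε) :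
    ∃ δ > 0, ∀ t ∈ Icc (fA P u) (fB P u), |t - t₀| < δ →
      gfun P u t < gfun P u t₀ + ε ∧ hfun P u t₀ - ε < hfun P u t := by
  obtain ⟨R, hRpos, hR⟩ := gh_bound (u := u) hP hPc hu hne
  classical
  set δ₁ : ℝ := if fA P u < t₀ then (t₀ - fA P u) * ε / (2 * R + 1) else 1 with hδ₁
  set δ₂ : ℝ := if t₀ < fB P u then (fB P u - t₀) * ε / (2 * R + 1) else 1 with hδ₂
  have hδ₁pos : 0 < δ₁ := by
    rw [hδ₁]; split_ifs with h
    · exact div_pos (mul_pos (sub_pos.mpr h) hε) (by positivity)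
    · exact one_pos
  have hδ₂pos : 0 < δ₂ := by
    rw [hδ₂]; split_ifs with h
    · exact div_pos (mul_pos (sub_pos.mpr h) hε) (by positivity)
    · exact one_pos
  refine ⟨min δ₁ δ₂, lt_min hδ₁pos hδ₂pos, fun t ht hdist => ?_⟩
  rcases lt_trichotomy t t₀ with hlt | heq | hgt
  · -- t < t₀, use e = fA
    have hA : fA P u < t₀ := lt_of_le_of_lt ht.1 hlt
    have hd1 : δ₁ = (t₀ - fA P u) * ε / (2 * R + 1) := by rw [hδ₁, if_pos hA]
    set β := (t₀ - t) / (t₀ - fA P u) with hβ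
    have hden : 0 < t₀ - fA P u := by linarith
    have hβ0 : 0 ≤ β := div_nonneg (by linarith) hden.le
    have hβ1 : β ≤ 1 := by rw [hβ, div_le_one hden]; linarith [ht.1]
    have hteq : t = (1 - β) * t₀ + β * fA P u := by rw [hβ]; field_simp; ring
    have hest := gfun_est hP hPc hu hne hR ht0 (left_mem_Icc.mpr (ht0.1.trans ht0.2)) hβ0 hβ1
    have hest2 := hfun_est hP hPc hu hne hR ht0 (left_mem_Icc.mpr (ht0.1.trans ht0.2)) hβ0 hβ1
    rw [← hteq] at hest hest2
    have hβsmall : β * (2 * R + 1) < ε := by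
      have h2 : |t - t₀| < δ₁ := lt_of_lt_of_le hdist (min_le_left _ _)
      rw [hd1] at h2
      have h3 : t₀ - t < (t₀ - fA P u) * ε / (2 * R + 1) := by
        rw [abs_sub_lt_iff] at h2; linarith [h2.2]
      rw [hβ, div_mul_eq_mul_div, div_lt_iff₀ hden]
      calc (t₀ - t) * (2 * R + 1) < ((t₀ - fA P u) * ε / (2 * R + 1)) * (2 * R + 1) := by
            apply mul_lt_mul_of_pos_right h3; positivity
        _ = ε * (t₀ - fA P u) := by field_simp
    have : β * (2 * R) < ε := by nlinarith
    exact ⟨by linarith, by linarith⟩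
  · subst heq; exact ⟨by linarith, by linarith⟩
  · -- t > t₀, use e = fB
    have hB : t₀ < fB P u := lt_of_lt_of_le hgt ht.2
    have hd2 : δ₂ = (fB P u - t₀) * ε / (2 * R + 1) := by rw [hδ₂, if_pos hB]
    set β := (t - t₀) / (fB P u - t₀) with hβ
    have hden : 0 < fB P u - t₀ := by linarith
    have hβ0 : 0 ≤ β := div_nonneg (by linarith) hden.le
    have hβ1 : β ≤ 1 := by rw [hβ, div_le_one hden]; linarith [ht.2]
    have hteq : t = (1 - β) * t₀ + β * fB P u := by rw [hβ]; field_simp; ring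
    have hest := gfun_est hP hPc hu hne hR ht0 (right_mem_Icc.mpr (ht0.1.trans ht0.2)) hβ0 hβ1
    have hest2 := hfun_est hP hPc hu hne hR ht0 (right_mem_Icc.mpr (ht0.1.trans ht0.2)) hβ0 hβ1
    rw [← hteq] at hest hest2
    have hβsmall : β * (2 * R + 1) < ε := by
      have h2 : |t - t₀| < δ₂ := lt_of_lt_of_le hdist (min_le_right _ _)
      rw [hd2] at h2
      have h3 : t - t₀ < (fB P u - t₀) * ε / (2 * R + 1) := by
        rw [abs_sub_lt_iff] at h2; linarith [h2.1]
      rw [hβ, div_mul_eq_mul_div, div_lt_iff₀ hden]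
      calc (t - t₀) * (2 * R + 1) < ((fB P u - t₀) * ε / (2 * R + 1)) * (2 * R + 1) := by
            apply mul_lt_mul_of_pos_right h3; positivity
        _ = ε * (fB P u - t₀) := by field_simp
    have : β * (2 * R) < ε := by nlinarith
    exact ⟨by linarith, by linarith⟩

lemma gfun_lsc (hP : IsCompact P) (hPc : Convex ℝ P) (hu : ‖u‖ = 1) (hne : P.Nonempty)
    {t₀ : ℝ} (ht0 : t₀ ∈ Icc (fA P u) (fB P u)) {ε : ℝ} (hε : 0 < ε) :
    ∃ δ > 0, ∀ t ∈ Icc (fA P u) (fB P u), |t - t₀| < δ →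
      gfun P u t₀ - ε < gfun P u t := by
  set r := gfun P u t₀ - ε with hr
  have hKc : IsCompact ((fun x : E2 => (inner ℝ x u : ℝ)) ''
      (P ∩ {x : E2 | (inner ℝ x (perpv u) : ℝ) ≤ r})) := by
    refine ((hP.inter_right ?_).image (continuous_id.inner continuous_const))
    exact IsClosed.preimage
      (continuous_id.inner continuous_const : Continuous fun x : E2 => (inner ℝ x (perpv u) : ℝ))
      isClosed_Iic
  have ht0K : t₀ ∉ (fun x : E2 => (inner ℝ x u : ℝ)) ''
      (P ∩ {x : E2 | (inner ℝ x (perpv u) : ℝ) ≤ r}) := by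
    rintro ⟨x, ⟨hxP, hxs⟩, hfx⟩
    have h1 : (inner ℝ x (perpv u) : ℝ) ∈ Sl P u t₀ := by
      have := mem_Sl_self (u := u) hu hxP
      rwa [show (inner ℝ x u : ℝ) = t₀ from hfx] at this
    have h2 := (Sl_subset_Icc hP hu h1).1
    simp only [mem_setOf_eq] at hxs
    linarith
  have hopen : IsOpen ((fun x : E2 => (inner ℝ x u : ℝ)) ''
      (P ∩ {x : E2 | (inner ℝ x (perpv u) : ℝ) ≤ r}))ᶜ := hKc.isClosed.isOpen_compl
  obtain ⟨δ, hδpos, hball⟩ := Metric.isOpen_iff.mp hopen t₀ ht0K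
  refine ⟨δ, hδpos, fun t ht hdist => ?_⟩
  by_contra hcon
  push_neg at hcon
  have htK : t ∈ (fun x : E2 => (inner ℝ x u : ℝ)) ''
      (P ∩ {x : E2 | (inner ℝ x (perpv u) : ℝ) ≤ r}) := by
    have hSne := Sl_nonempty hP hPc hu hne ht
    have hg : pt u t (gfun P u t) ∈ P := gfun_mem hP hu hSne
    refine ⟨pt u t (gfun P u t), ⟨hg, ?_⟩, inner_pt_u u hu _ _⟩
    simp only [mem_setOf_eq]
    rw [inner_pt_w u hu]; exact hcon
  exact hball (by rwa [Metric.mem_ball, Real.dist_eq]) htK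

lemma hfun_usc2 (hP : IsCompact P) (hPc : Convex ℝ P) (hu : ‖u‖ = 1) (hne : P.Nonempty)
    {t₀ : ℝ} (ht0 : t₀ ∈ Icc (fA P u) (fB P u)) {ε : ℝ} (hε : 0 < ε) :
    ∃ δ > 0, ∀ t ∈ Icc (fA P u) (fB P u), |t - t₀| < δ →
      hfun P u t < hfun P u t₀ + ε := by
  set r := hfun P u t₀ + ε with hr
  have hKc : IsCompact ((fun x : E2 => (inner ℝ x u : ℝ)) ''
      (P ∩ {x : E2 | r ≤ (inner ℝ x (perpv u) : ℝ)})) := by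
    refine ((hP.inter_right ?_).image (continuous_id.inner continuous_const))
    exact IsClosed.preimage
      (continuous_id.inner continuous_const : Continuous fun x : E2 => (inner ℝ x (perpv u) : ℝ))
      isClosed_Ici
  have ht0K : t₀ ∉ (fun x : E2 => (inner ℝ x u : ℝ)) ''
      (P ∩ {x : E2 | r ≤ (inner ℝ x (perpv u) : ℝ)}) := by
    rintro ⟨x, ⟨hxP, hxs⟩, hfx⟩
    have h1 : (inner ℝ x (perpv u) : ℝ) ∈ Sl P u t₀ := by
      have := mem_Sl_self (u := u) hu hxP
      rwa [show (inner ℝ x u : ℝ) = t₀ from hfx] at this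
    have h2 := (Sl_subset_Icc hP hu h1).2
    simp only [mem_setOf_eq] at hxs
    linarith
  have hopen : IsOpen ((fun x : E2 => (inner ℝ x u : ℝ)) ''
      (P ∩ {x : E2 | r ≤ (inner ℝ x (perpv u) : ℝ)}))ᶜ := hKc.isClosed.isOpen_compl
  obtain ⟨δ, hδpos, hball⟩ := Metric.isOpen_iff.mp hopen t₀ ht0K
  refine ⟨δ, hδpos, fun t ht hdist => ?_⟩
  by_contra hcon
  push_neg at hcon
  have htK : t ∈ (fun x : E2 => (inner ℝ x u : ℝ)) ''
      (P ∩ {x : E2 | r ≤ (inner ℝ x (perpv u) : ℝ)}) := by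
    have hSne := Sl_nonempty hP hPc hu hne ht
    have hg : pt u t (hfun P u t) ∈ P := hfun_mem hP hu hSne
    refine ⟨pt u t (hfun P u t), ⟨hg, ?_⟩, inner_pt_u u hu _ _⟩
    simp only [mem_setOf_eq]
    rw [inner_pt_w u hu]; exact hcon
  exact hball (by rwa [Metric.mem_ball, Real.dist_eq]) htK

lemma gfun_continuousOn (hP : IsCompact P) (hPc : Convex ℝ P) (hu : ‖u‖ = 1)
    (hne : P.Nonempty) : ContinuousOn (gfun P u) (Icc (fA P u) (fB P u)) := by
  rw [Metric.continuousOn_iff]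
  intro t₀ ht0 ε hε
  obtain ⟨δ₁, hδ₁, h1⟩ := gfun_usc hP hPc hu hne ht0 hε
  obtain ⟨δ₂, hδ₂, h2⟩ := gfun_lsc hP hPc hu hne ht0 hε
  refine ⟨min δ₁ δ₂, lt_min hδ₁ hδ₂, fun t ht hdist => ?_⟩
  rw [Real.dist_eq] at hdist ⊢
  have e1 := (h1 t ht (lt_of_lt_of_le hdist (min_le_left _ _))).1
  have e2 := h2 t ht (lt_of_lt_of_le hdist (min_le_right _ _))
  rw [abs_sub_lt_iff]
  constructor <;> linarith

lemma hfun_continuousOn (hP : IsCompact P) (hPc : Convex ℝ P) (hu : ‖u‖ = 1)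
    (hne : P.Nonempty) : ContinuousOn (hfun P u) (Icc (fA P u) (fB P u)) := by
  rw [Metric.continuousOn_iff]
  intro t₀ ht0 ε hε
  obtain ⟨δ₁, hδ₁, h1⟩ := gfun_usc hP hPc hu hne ht0 hε
  obtain ⟨δ₂, hδ₂, h2⟩ := hfun_usc2 hP hPc hu hne ht0 hε
  refine ⟨min δ₁ δ₂, lt_min hδ₁ hδ₂, fun t ht hdist => ?_⟩
  rw [Real.dist_eq] at hdist ⊢
  have e1 := (h1 t ht (lt_of_lt_of_le hdist (min_le_left _ _))).2
  have e2 := h2 t ht (lt_of_lt_of_le hdist (min_le_right _ _))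
  rw [abs_sub_lt_iff]
  constructor <;> linarith

-- ## interior criterion
lemma pt_mem_interior (hP : IsCompact P) (hPc : Convex ℝ P) (hu : ‖u‖ = 1) (hne : P.Nonempty)
    {t v : ℝ} (htA : fA P u < t) (htB : t < fB P u)
    (hvg : gfun P u t < v) (hvh : v < hfun P u t) :
    pt u t v ∈ interior P := by
  have ht : t ∈ Icc (fA P u) (fB P u) := ⟨htA.le, htB.le⟩
  set ε := min (v - gfun P u t) (hfun P u t - v) with hε
  have hεpos : 0 < ε := lt_min (by linarith) (by linarith)
  obtain ⟨δ₁, hδ₁pos, h1⟩ := gfun_usc hP hPc hu hne ht (half_pos hεpos)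
  set δ := min δ₁ (min (t - fA P u) (fB P u - t)) with hδ
  have hδpos : 0 < δ := lt_min hδ₁pos (lt_min (by linarith) (by linarith))
  set N : Set E2 := {y : E2 | |(inner ℝ y u : ℝ) - t| < δ ∧ |(inner ℝ y (perpv u) : ℝ) - v| < ε / 2}
    with hN
  have hNopen : IsOpen N := by
    have c1 : Continuous fun y : E2 => (inner ℝ y u : ℝ) := continuous_id.inner continuous_const
    have c2 : Continuous fun y : E2 => (inner ℝ y (perpv u) : ℝ) :=
      continuous_id.inner continuous_const
    have : N = ((fun y : E2 => (inner ℝ y u : ℝ)) ⁻¹' (Metric.ball t δ)) ∩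
        ((fun y : E2 => (inner ℝ y (perpv u) : ℝ)) ⁻¹' (Metric.ball v (ε / 2))) := by
      ext y; simp [hN, Metric.mem_ball, Real.dist_eq]
    rw [this]
    exact (Metric.isOpen_ball.preimage c1).inter (Metric.isOpen_ball.preimage c2)
  have hmemN : pt u t v ∈ N := by
    constructor
    · rw [inner_pt_u u hu]; simpa using hδpos
    · rw [inner_pt_w u hu]; simpa using half_pos hεpos
  have hNP : N ⊆ P := by
    rintro y ⟨hy1, hy2⟩
    set t' := (inner ℝ y u : ℝ) with ht'
    set v' := (inner ℝ y (perpv u) : ℝ) with hv'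
    have habs := abs_sub_lt_iff.mp hy1
    have habs2 := abs_sub_lt_iff.mp hy2
    have hd2 : δ ≤ t - fA P u := (min_le_right _ _).trans (min_le_left _ _)
    have hd3 : δ ≤ fB P u - t := (min_le_right _ _).trans (min_le_right _ _)
    have ht'mem : t' ∈ Icc (fA P u) (fB P u) := ⟨by linarith [habs.2], by linarith [habs.1]⟩
    have hest := h1 t' ht'mem (lt_of_lt_of_le hy1 (min_le_left _ _))
    have hεle1 : ε ≤ v - gfun P u t := min_le_left _ _
    have hεle2 : ε ≤ hfun P u t - v := min_le_right _ _
    have hv'mem : v' ∈ Icc (gfun P u t') (hfun P u t') := by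
      constructor
      · have := hest.1
        linarith [habs2.2]
      · have := hest.2
        linarith [habs2.1]
    have hSne := Sl_nonempty hP hPc hu hne ht'mem
    have : v' ∈ Sl P u t' := Icc_subset_Sl hP hPc hu hSne hv'mem
    have hy : pt u t' v' ∈ P := this
    rwa [ht', hv', pt_eq_self u hu] at hy
  exact mem_interior.mpr ⟨N, hNP, hNopen, hmemN⟩

-- ## frontier lemmas
lemma hfun_mem_frontier (hP : IsCompact P) (hPc : Convex ℝ P) (hu : ‖u‖ = 1) (hne : P.Nonempty)
    {t : ℝ} (ht : t ∈ Icc (fA P u) (fB P u)) : pt u t (hfun P u t) ∈ frontier P := by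
  have hSne := Sl_nonempty hP hPc hu hne ht
  have hmem : pt u t (hfun P u t) ∈ P := hfun_mem hP hu hSne
  rw [hP.isClosed.frontier_eq]
  refine ⟨hmem, fun hint => ?_⟩
  have hφ : Continuous fun e : ℝ => pt u t (hfun P u t + e) := by unfold pt; fun_prop
  have hev : ∀ᶠ e in nhds (0:ℝ), pt u t (hfun P u t + e) ∈ interior P := by
    have h0 : pt u t (hfun P u t + 0) ∈ interior P := by simpa using hint
    exact (hφ.continuousAt).eventually_mem (isOpen_interior.mem_nhds h0)
  obtain ⟨δ, hδpos, hmem'⟩ := Metric.eventually_nhds_iff.mp hev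
  have : pt u t (hfun P u t + δ / 2) ∈ P := by
    have := hmem' (y := δ / 2) (by rw [Real.dist_eq]; simp [abs_of_pos (half_pos hδpos)]; linarith)
    exact interior_subset this
  have : hfun P u t + δ / 2 ∈ Sl P u t := this
  have := (Sl_subset_Icc hP hu this).2
  linarith

lemma gfun_mem_frontier (hP : IsCompact P) (hPc : Convex ℝ P) (hu : ‖u‖ = 1) (hne : P.Nonempty)
    {t : ℝ} (ht : t ∈ Icc (fA P u) (fB P u)) : pt u t (gfun P u t) ∈ frontier P := by
  have hSne := Sl_nonempty hP hPc hu hne ht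
  have hmem : pt u t (gfun P u t) ∈ P := gfun_mem hP hu hSne
  rw [hP.isClosed.frontier_eq]
  refine ⟨hmem, fun hint => ?_⟩
  have hφ : Continuous fun e : ℝ => pt u t (gfun P u t - e) := by unfold pt; fun_prop
  have hev : ∀ᶠ e in nhds (0:ℝ), pt u t (gfun P u t - e) ∈ interior P := by
    have h0 : pt u t (gfun P u t - 0) ∈ interior P := by simpa using hint
    exact (hφ.continuousAt).eventually_mem (isOpen_interior.mem_nhds h0)
  obtain ⟨δ, hδpos, hmem'⟩ := Metric.eventually_nhds_iff.mp hev
  have : pt u t (gfun P u t - δ / 2) ∈ P := by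
    have := hmem' (y := δ / 2) (by rw [Real.dist_eq]; simp [abs_of_pos (half_pos hδpos)]; linarith)
    exact interior_subset this
  have : gfun P u t - δ / 2 ∈ Sl P u t := this
  have := (Sl_subset_Icc hP hu this).1
  linarith

lemma slice_fA_frontier (hP : IsCompact P) (hu : ‖u‖ = 1)
    {x : E2} (hx : x ∈ P) (hfx : (inner ℝ x u : ℝ) = fA P u) : x ∈ frontier P := by
  rw [hP.isClosed.frontier_eq]
  refine ⟨hx, fun hint => ?_⟩
  have hφ : Continuous fun e : ℝ => pt u ((inner ℝ x u : ℝ) - e) (inner ℝ x (perpv u) : ℝ) := by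
    unfold pt; fun_prop
  have hev : ∀ᶠ e in nhds (0:ℝ),
      pt u ((inner ℝ x u : ℝ) - e) (inner ℝ x (perpv u) : ℝ) ∈ interior P := by
    have h0 : pt u ((inner ℝ x u : ℝ) - 0) (inner ℝ x (perpv u) : ℝ) ∈ interior P := by
      rw [sub_zero, pt_eq_self u hu]; exact hint
    exact (hφ.continuousAt).eventually_mem (isOpen_interior.mem_nhds h0)
  obtain ⟨δ, hδpos, hmem'⟩ := Metric.eventually_nhds_iff.mp hev
  have hmem2 : pt u ((inner ℝ x u : ℝ) - δ / 2) (inner ℝ x (perpv u) : ℝ) ∈ P := by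
    have := hmem' (y := δ / 2) (by rw [Real.dist_eq]; simp [abs_of_pos (half_pos hδpos)]; linarith)
    exact interior_subset this
  have := (mem_Icc_fAB (u := u) hP hmem2).1
  rw [inner_pt_u u hu] at this
  linarith

lemma slice_fB_frontier (hP : IsCompact P) (hu : ‖u‖ = 1)
    {x : E2} (hx : x ∈ P) (hfx : (inner ℝ x u : ℝ) = fB P u) : x ∈ frontier P := by
  rw [hP.isClosed.frontier_eq]
  refine ⟨hx, fun hint => ?_⟩
  have hφ : Continuous fun e : ℝ => pt u ((inner ℝ x u : ℝ) + e) (inner ℝ x (perpv u) : ℝ) := by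
    unfold pt; fun_prop
  have hev : ∀ᶠ e in nhds (0:ℝ),
      pt u ((inner ℝ x u : ℝ) + e) (inner ℝ x (perpv u) : ℝ) ∈ interior P := by
    have h0 : pt u ((inner ℝ x u : ℝ) + 0) (inner ℝ x (perpv u) : ℝ) ∈ interior P := by
      rw [add_zero, pt_eq_self u hu]; exact hint
    exact (hφ.continuousAt).eventually_mem (isOpen_interior.mem_nhds h0)
  obtain ⟨δ, hδpos, hmem'⟩ := Metric.eventually_nhds_iff.mp hev
  have hmem2 : pt u ((inner ℝ x u : ℝ) + δ / 2) (inner ℝ x (perpv u) : ℝ) ∈ P := by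
    have := hmem' (y := δ / 2) (by rw [Real.dist_eq]; simp [abs_of_pos (half_pos hδpos)]; linarith)
    exact interior_subset this
  have := (mem_Icc_fAB (u := u) hP hmem2).2
  rw [inner_pt_u u hu] at this
  linarith

-- ## classification of boundary points
lemma frontier_classify (hP : IsCompact P) (hPc : Convex ℝ P) (hu : ‖u‖ = 1) (hne : P.Nonempty)
    {x : E2} (hx : x ∈ frontier P) (hA : fA P u < (inner ℝ x u : ℝ))
    (hB : (inner ℝ x u : ℝ) < fB P u) :
    x = pt u (inner ℝ x u : ℝ) (gfun P u (inner ℝ x u : ℝ)) ∨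
    x = pt u (inner ℝ x u : ℝ) (hfun P u (inner ℝ x u : ℝ)) := by
  have hxP : x ∈ P := hP.isClosed.frontier_subset hx
  have hs : (inner ℝ x (perpv u) : ℝ) ∈ Sl P u (inner ℝ x u : ℝ) := mem_Sl_self hu hxP
  have hIcc := Sl_subset_Icc hP hu hs
  rcases eq_or_lt_of_le hIcc.1 with h | h
  · left; rw [h]; exact (pt_eq_self u hu x).symm
  rcases eq_or_lt_of_le hIcc.2 with h2 | h2
  · right; rw [← h2]; exact (pt_eq_self u hu x).symm
  · exfalso
    have := pt_mem_interior hP hPc hu hne hA hB h h2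
    rw [pt_eq_self u hu] at this
    rw [hP.isClosed.frontier_eq] at hx
    exact hx.2 this

-- ## key existence lemma
lemma key_arc (hP : IsCompact P) (hPc : Convex ℝ P) (hu : ‖u‖ = 1)
    {ni nj : E2} {c : ℝ} (hni : ni ∈ frontier P) (hnj : nj ∈ frontier P)
    (hic : (inner ℝ ni u : ℝ) < c) (hjc : (inner ℝ nj u : ℝ) < c) :
    ∃ A : Set E2, IsConnected A ∧ A ⊆ frontier P ∧ ni ∈ A ∧ nj ∈ A ∧
      ∀ x ∈ A, (inner ℝ x u : ℝ) < c := by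
  have hniP : ni ∈ P := hP.isClosed.frontier_subset hni
  have hnjP : nj ∈ P := hP.isClosed.frontier_subset hnj
  have hne : P.Nonempty := ⟨ni, hniP⟩
  set a := fA P u with ha
  set b := fB P u with hb
  set m := max (inner ℝ ni u : ℝ) (inner ℝ nj u : ℝ) with hm
  have hia := mem_Icc_fAB (u := u) hP hniP
  have hja := mem_Icc_fAB (u := u) hP hnjP
  have ham : a ≤ m := le_trans hia.1 (le_max_left _ _)
  have hmb : m ≤ b := max_le hia.2 hja.2
  have hmc : m < c := max_lt hic hjc
  have hsub : Icc a m ⊆ Icc a b := Icc_subset_Icc le_rfl hmb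
  set C1 : Set E2 := {x ∈ P | (inner ℝ x u : ℝ) = a} with hC1
  set Gg : Set E2 := (fun t => pt u t (gfun P u t)) '' Icc a m with hGg
  set Gh : Set E2 := (fun t => pt u t (hfun P u t)) '' Icc a m with hGh
  set Cm : Set E2 := {x ∈ P | (inner ℝ x u : ℝ) = b ∧ b ≤ m} with hCm
  set A := C1 ∪ Gg ∪ Gh ∪ Cm with hA
  -- convexity of slices C1, Cm
  have hC1conv : Convex ℝ C1 := by
    intro x hx y hy α β hα hβ hαβ
    refine ⟨hPc hx.1 hy.1 hα hβ hαβ, ?_⟩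
    rw [inner_add_left, real_inner_smul_left, real_inner_smul_left, hx.2, hy.2]
    linear_combination a * hαβ
  have hCmconv : Convex ℝ Cm := by
    intro x hx y hy α β hα hβ hαβ
    refine ⟨hPc hx.1 hy.1 hα hβ hαβ, ?_, hx.2.2⟩
    rw [inner_add_left, real_inner_smul_left, real_inner_smul_left, hx.2.1, hy.2.1]
    linear_combination b * hαβ
  -- continuity of the graph maps
  have hcontg : ContinuousOn (fun t => pt u t (gfun P u t)) (Icc a m) := by
    have h1 : ContinuousOn (fun t : ℝ => (t, gfun P u t)) (Icc a m) :=
      ContinuousOn.prodMk continuousOn_id ((gfun_continuousOn hP hPc hu hne).mono hsub)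
    exact (continuous_pt u).comp_continuousOn h1
  have hconth : ContinuousOn (fun t => pt u t (hfun P u t)) (Icc a m) := by
    have h1 : ContinuousOn (fun t : ℝ => (t, hfun P u t)) (Icc a m) :=
      ContinuousOn.prodMk continuousOn_id ((hfun_continuousOn hP hPc hu hne).mono hsub)
    exact (continuous_pt u).comp_continuousOn h1
  -- base points
  have hbase_g : pt u a (gfun P u a) ∈ C1 := by
    refine ⟨gfun_mem hP hu (Sl_nonempty hP hPc hu hne (left_mem_Icc.mpr (ham.trans hmb))), ?_⟩
    exact inner_pt_u u hu _ _
  have hbase_h : pt u a (hfun P u a) ∈ C1 := by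
    refine ⟨hfun_mem hP hu (Sl_nonempty hP hPc hu hne (left_mem_Icc.mpr (ham.trans hmb))), ?_⟩
    exact inner_pt_u u hu _ _
  have hGg_base : pt u a (gfun P u a) ∈ Gg := ⟨a, left_mem_Icc.mpr ham, rfl⟩
  have hGh_base : pt u a (hfun P u a) ∈ Gh := ⟨a, left_mem_Icc.mpr ham, rfl⟩
  -- preconnectedness
  have hC1p : IsPreconnected C1 := hC1conv.isPreconnected
  have hGgp : IsPreconnected Gg := (isPreconnected_Icc).image _ hcontg
  have hGhp : IsPreconnected Gh := (isPreconnected_Icc).image _ hconth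
  have hU1 : IsPreconnected (C1 ∪ Gg) :=
    hC1p.union (pt u a (gfun P u a)) hbase_g hGg_base hGgp
  have hU2 : IsPreconnected (C1 ∪ Gg ∪ Gh) := by
    apply hU1.union (pt u a (hfun P u a)) (Or.inl hbase_h) hGh_base hGhp
  have hU3 : IsPreconnected A := by
    by_cases hbm : b ≤ m
    · have hbm' : b = m := le_antisymm hbm hmb
      have hmIcc : m ∈ Icc a m := right_mem_Icc.mpr ham
      have hx1 : pt u m (gfun P u m) ∈ C1 ∪ Gg ∪ Gh := Or.inl (Or.inr ⟨m, hmIcc, rfl⟩)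
      have hx2 : pt u m (gfun P u m) ∈ Cm := by
        refine ⟨gfun_mem hP hu (Sl_nonempty hP hPc hu hne ⟨ham, hmb⟩), ?_, hbm⟩
        rw [inner_pt_u u hu, hbm']
      exact hU2.union _ hx1 hx2 hCmconv.isPreconnected
    · have : Cm = ∅ := by
        ext x; simp only [hCm, mem_setOf_eq, mem_empty_iff_false, iff_false]
        rintro ⟨-, -, h⟩; exact hbm h
      rw [hA, this, union_empty]; exact hU2
  -- A ⊆ frontier P
  have hAf : A ⊆ frontier P := by
    rintro x (((⟨hxP, hxa⟩ | ⟨t, htm, rfl⟩) | ⟨t, htm, rfl⟩) | ⟨hxP, hxb, -⟩)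
    · exact slice_fA_frontier hP hu hxP hxa
    · exact gfun_mem_frontier hP hPc hu hne (hsub htm)
    · exact hfun_mem_frontier hP hPc hu hne (hsub htm)
    · exact slice_fB_frontier hP hu hxP hxb
  -- inner bound on A
  have hAc : ∀ x ∈ A, (inner ℝ x u : ℝ) < c := by
    rintro x (((⟨hxP, hxa⟩ | ⟨t, htm, rfl⟩) | ⟨t, htm, rfl⟩) | ⟨hxP, hxb, hbm⟩)
    · rw [hxa]; exact lt_of_le_of_lt ham hmc
    · rw [inner_pt_u u hu]; exact lt_of_le_of_lt htm.2 hmc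
    · rw [inner_pt_u u hu]; exact lt_of_le_of_lt htm.2 hmc
    · rw [hxb]; exact lt_of_le_of_lt hbm hmc
  -- membership of boundary points with inner ≤ m
  have hmemA : ∀ x ∈ frontier P, (inner ℝ x u : ℝ) ≤ m → x ∈ A := by
    intro x hx hxm
    have hxP : x ∈ P := hP.isClosed.frontier_subset hx
    have hxI := mem_Icc_fAB (u := u) hP hxP
    rcases eq_or_lt_of_le hxI.1 with hxa | hxa
    · exact Or.inl (Or.inl (Or.inl ⟨hxP, hxa.symm⟩))
    rcases eq_or_lt_of_le hxI.2 with hxb | hxb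
    · exact Or.inr ⟨hxP, hxb, le_trans (le_of_eq hxb.symm) hxm⟩
    · rcases frontier_classify hP hPc hu hne hx hxa hxb with h | h
      · exact Or.inl (Or.inl (Or.inr ⟨(inner ℝ x u : ℝ), ⟨hxI.1, hxm⟩, h.symm⟩))
      · exact Or.inl (Or.inr ⟨(inner ℝ x u : ℝ), ⟨hxI.1, hxm⟩, h.symm⟩)
  have hniA : ni ∈ A := hmemA ni hni (le_max_left _ _)
  have hnjA : nj ∈ A := hmemA nj hnj (le_max_right _ _)
  exact ⟨A, ⟨⟨ni, hniA⟩, hU3⟩, hAf, hniA, hnjA, hAc⟩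

/-- Ring connectivity (some boundary arc from nᵢ to nⱼ avoids the half-plane H)
holds iff the segment [nᵢ, nⱼ] is disjoint from H. -/
theorem stmt9 (P : Set E2) (hP : IsCompact P) (hPc : Convex ℝ P)
    (ni nj : E2) (hni : ni ∈ frontier P) (hnj : nj ∈ frontier P)
    (u : E2) (hu : ‖u‖ = 1) (c : ℝ) :
    (∃ A : Set E2, IsConnected A ∧ A ⊆ frontier P ∧ ni ∈ A ∧ nj ∈ A ∧
        A ∩ {x : E2 | c ≤ (inner ℝ x u : ℝ)} = ∅) ↔
      segment ℝ ni nj ∩ {x : E2 | c ≤ (inner ℝ x u : ℝ)} = ∅ := by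
  constructor
  · rintro ⟨A, hA, hAP, hiA, hjA, hdisj⟩
    have hic : (inner ℝ ni u : ℝ) < c := by
      by_contra h
      push_neg at h
      have : ni ∈ A ∩ {x : E2 | c ≤ (inner ℝ x u : ℝ)} := ⟨hiA, h⟩
      rw [hdisj] at this
      exact this
    have hjc : (inner ℝ nj u : ℝ) < c := by
      by_contra h
      push_neg at h
      have : nj ∈ A ∩ {x : E2 | c ≤ (inner ℝ x u : ℝ)} := ⟨hjA, h⟩
      rw [hdisj] at this
      exact this
    rw [eq_empty_iff_forall_notMem]
    rintro x ⟨hxseg, hxH⟩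
    obtain ⟨α, β, hα, hβ, hαβ, rfl⟩ := hxseg
    have hx : (inner ℝ (α • ni + β • nj) u : ℝ) = α * (inner ℝ ni u : ℝ) + β * (inner ℝ nj u : ℝ) := by
      rw [inner_add_left, real_inner_smul_left, real_inner_smul_left]
    have hle : α * (inner ℝ ni u : ℝ) + β * (inner ℝ nj u : ℝ) ≤
        max (inner ℝ ni u : ℝ) (inner ℝ nj u : ℝ) :=
      Convex.combo_le_max (inner ℝ ni u : ℝ) (inner ℝ nj u : ℝ) hα hβ hαβ
    have hlt := lt_of_le_of_lt hle (max_lt hic hjc)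
    have hxH' : c ≤ (inner ℝ (α • ni + β • nj) u : ℝ) := hxH
    rw [hx] at hxH'
    linarith
  · intro hseg
    have hni' : (inner ℝ ni u : ℝ) < c := by
      by_contra h
      push_neg at h
      have : ni ∈ segment ℝ ni nj ∩ {x : E2 | c ≤ (inner ℝ x u : ℝ)} :=
        ⟨left_mem_segment ℝ ni nj, h⟩
      rw [hseg] at this
      exact this
    have hnj' : (inner ℝ nj u : ℝ) < c := by
      by_contra h
      push_neg at h
      have : nj ∈ segment ℝ ni nj ∩ {x : E2 | c ≤ (inner ℝ x u : ℝ)} :=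
        ⟨right_mem_segment ℝ ni nj, h⟩
      rw [hseg] at this
      exact this
    obtain ⟨A, h1, h2, h3, h4, h5⟩ := key_arc hP hPc hu hni hnj hni' hnj'
    refine ⟨A, h1, h2, h3, h4, ?_⟩
    rw [eq_empty_iff_forall_notMem]
    rintro x ⟨hxA, hxH⟩
    exact absurd hxH (not_le.mpr (h5 x hxA))
end
end
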